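/- Validity of the flow-balance and capacity constraints of the aggregated formulation: let (H, E', {P^r}) be a feasible MA-GHLP solution, i.e., each commodity r is routed along a consistent r-path P^r. Define z_i = 1 iff i ∈ H, y_{km} = 1 iff km ∈ E', x¹_{ij} = 1 iff some P^r uses (i,j) as an access arc, x²_{ij} = 1 iff some P^r uses (i,j) as a distribution arc, and let h¹_{ij}, t_{ij}, h²_{ij} be the total demand routed on arc (i,j) as access, interhub and distribution arc, respectively. Then: (a) Σ_{j≠i} h¹_{ij} = (1−z_i) O_i and Σ_{j≠i} h²_{ji} = (1−z_i) D_i for every i ∈ V; (b) O_i z_i + Σ_{j≠i}(h¹_{ji} + t_{ji}) = D_i z_i + Σ_{j≠i}(h²_{ij} + t_{ij}) for every i ∈ V; (c) h¹_{ij} ≤ O_i x¹_{ij} and h²_{ij} ≤ D_j x²_{ij} for every arc (i,j) ∈ A; and (d) t_{km} + t_{mk} ≤ W̄ y_{km} for every edge km ∈ E. -/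

import Mathlib

open scoped Classical
open Finset

/-- A consistent r-path, given by its list `ks` of intermediate hubs, for a
commodity with origin `a` and destination `b`, in the design solution with hub
set `H` and interhub edge set `E'` (encoded as a set of ordered pairs of
distinct hubs, closed under swapping). -/
def IsRPath {n : ℕ} (H : Finset (Fin n)) (E' : Finset (Fin n × Fin n))
    (a b : Fin n) (ks : List (Fin n)) : Prop :=
  ks ≠ [] ∧ ks.Nodup ∧ (∀ k ∈ ks, k ∈ H) ∧
    ks.Chain' (fun x y => (x, y) ∈ E') ∧
    (a ∈ H → ks.head? = some a) ∧ (b ∈ H → ks.getLast? = some b)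

/-- `h¹_{ij}`: total demand routed on arc `(i, j)` as an access arc by the
family of r-paths `P`. -/
def accessFlow {n : ℕ} {R : Type} [Fintype R] (H : Finset (Fin n))
    (o : R → Fin n) (w : R → ℝ) (P : R → List (Fin n)) (i j : Fin n) : ℝ :=
  ∑ r, if o r ∉ H ∧ o r = i ∧ (P r).headD (o r) = j then w r else 0

/-- `t_{ij}`: total demand routed on arc `(i, j)` as an interhub arc by the
family of r-paths `P`. -/
def interFlow {n : ℕ} {R : Type} [Fintype R]
    (w : R → ℝ) (P : R → List (Fin n)) (i j : Fin n) : ℝ :=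
  ∑ r, if (i, j) ∈ (P r).zip (P r).tail then w r else 0

/-- `h²_{ij}`: total demand routed on arc `(i, j)` as a distribution arc by the
family of r-paths `P`. -/
def distFlow {n : ℕ} {R : Type} [Fintype R] (H : Finset (Fin n))
    (d : R → Fin n) (w : R → ℝ) (P : R → List (Fin n)) (i j : Fin n) : ℝ :=
  ∑ r, if d r ∉ H ∧ d r = j ∧ (P r).getLastD (d r) = i then w r else 0

/-- `O_i`: total demand with origin at `i`. -/
def Odem {n : ℕ} {R : Type} [Fintype R] (o : R → Fin n) (w : R → ℝ)
    (i : Fin n) : ℝ :=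
  ∑ r, if o r = i then w r else 0

/-- `D_i`: total demand with destination at `i`. -/
def Ddem {n : ℕ} {R : Type} [Fintype R] (d : R → Fin n) (w : R → ℝ)
    (i : Fin n) : ℝ :=
  ∑ r, if d r = i then w r else 0


/-!
Every node `i` on a consistent path is entered exactly once — as the origin (when `i` is a hub
origin), by the access arc, or by an interhub arc — and, symmetrically, left exactly once. Hence
both sides of the hub balance equal the total demand of the commodities whose path visits `i`.
Reversing every path swaps origins with destinations and access with distribution arcs, so each
statement about distribution flows is the corresponding one about access flows. For the capacity
bound, a path without repeated hubs never traverses both `(k, m)` and `(m, k)`, and traverses only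
arcs of `E'`.
-/

namespace List

variable {α : Type*} {l : List α} {a b c : α}

theorem mem_zip_tail_iff :
    (a, b) ∈ l.zip l.tail ↔ ∃ (t : ℕ) (_ : t + 1 < l.length), l[t] = a ∧ l[t + 1] = b := by
  simp only [mem_iff_getElem, getElem_zip, getElem_tail, length_zip, length_tail,
    Prod.mk.injEq]
  exact ⟨fun ⟨t, _, h⟩ => ⟨t, by omega, h⟩, fun ⟨t, _, h⟩ => ⟨t, by omega, h⟩⟩

theorem IsChain.rel_of_mem_zip_tail {r : α → α → Prop} (hl : l.IsChain r)
    (h : (a, b) ∈ l.zip l.tail) : r a b := by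
  obtain ⟨t, ht, rfl, rfl⟩ := mem_zip_tail_iff.1 h
  exact hl.getElem t ht

theorem mem_zip_tail_reverse :
    (a, b) ∈ l.reverse.zip l.reverse.tail ↔ (b, a) ∈ l.zip l.tail := by
  simp only [mem_zip_tail_iff, length_reverse, getElem_reverse]
  constructor
  · rintro ⟨t, ht, rfl, rfl⟩
    refine ⟨l.length - 2 - t, by omega, ?_, ?_⟩ <;> congr 1 <;> omega
  · rintro ⟨t, ht, rfl, rfl⟩
    refine ⟨l.length - 2 - t, by omega, ?_, ?_⟩ <;> congr 1 <;> omega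

theorem exists_mem_zip_tail_iff_mem_tail : (∃ a, (a, b) ∈ l.zip l.tail) ↔ b ∈ l.tail := by
  simp_rw [mem_zip_tail_iff, mem_iff_getElem, getElem_tail, length_tail]
  exact ⟨fun ⟨_, t, ht, _, h⟩ => ⟨t, by omega, h⟩, fun ⟨t, ht, h⟩ => ⟨_, t, by omega, rfl, h⟩⟩

namespace Nodup

theorem fst_eq_of_mem_zip_tail (hl : l.Nodup) (ha : (a, c) ∈ l.zip l.tail)
    (hb : (b, c) ∈ l.zip l.tail) : a = b := by
  obtain ⟨t, ht, rfl, hc⟩ := mem_zip_tail_iff.1 ha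
  obtain ⟨s, hs, rfl, rfl⟩ := mem_zip_tail_iff.1 hb
  obtain rfl : t = s := by simpa using hl.getElem_inj_iff.1 hc
  rfl

theorem swap_not_mem_zip_tail (hl : l.Nodup) (h : (a, b) ∈ l.zip l.tail) :
    (b, a) ∉ l.zip l.tail := by
  intro h'
  obtain ⟨t, ht, rfl, rfl⟩ := mem_zip_tail_iff.1 h
  obtain ⟨s, hs, hs₁, hs₂⟩ := mem_zip_tail_iff.1 h'
  have := hl.getElem_inj_iff.1 hs₁
  have := hl.getElem_inj_iff.1 hs₂
  omega

theorem ne_of_mem_zip_tail (hl : l.Nodup) (h : (a, b) ∈ l.zip l.tail) : a ≠ b := by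
  rintro rfl
  exact hl.swap_not_mem_zip_tail h h

end Nodup

theorem headD_reverse : l.reverse.headD a = l.getLastD a := by simp

theorem headD_mem (hl : l ≠ []) : l.headD a ∈ l := by
  cases l with
  | nil => contradiction
  | cons x xs => exact mem_cons_self

end List

/-- The three terms on the left are the demand `c` entering `i` as a hub origin, along the access
arc and along an interhub arc. -/
theorem inflow_single_eq {α : Type*} [DecidableEq α] {H : Finset α} {ks : List α} {a i : α}
    (hne : ks ≠ []) (hnd : ks.Nodup) (hks : ∀ k ∈ ks, k ∈ H)
    (hhead : a ∈ H → ks.head? = some a) (c : ℝ) :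
    (if a = i then c else 0) * (if i ∈ H then 1 else 0) +
      ((if a ∉ H ∧ a ≠ i ∧ ks.headD a = i then c else 0) + (if i ∈ ks.tail then c else 0)) =
    if i ∈ ks then c else 0 := by
  obtain ⟨x, xs, rfl⟩ := List.exists_cons_of_ne_nil hne
  have hx : x ∈ H := hks x List.mem_cons_self
  have hxs : x ∉ xs := (List.nodup_cons.1 hnd).1
  have hax : a ∈ H → x = a := fun ha => by simpa using hhead ha
  have hxsH : i ∈ xs → i ∈ H := fun h => hks i (List.mem_cons_of_mem _ h)
  by_cases hix : i = x <;> by_cases hai : a = i <;> grind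

section Flows

variable {n : ℕ} {R : Type} [Fintype R] {H : Finset (Fin n)} {o d : R → Fin n} {w : R → ℝ}
  {P : R → List (Fin n)}

theorem distFlow_eq_accessFlow_reverse (i j : Fin n) :
    distFlow H d w P i j = accessFlow H d w (fun r => (P r).reverse) j i := by
  simp only [distFlow, accessFlow, List.headD_reverse]

theorem interFlow_eq_interFlow_reverse (i j : Fin n) :
    interFlow w P i j = interFlow w (fun r => (P r).reverse) j i := by
  simp only [interFlow, List.mem_zip_tail_reverse]

theorem Ddem_eq_Odem : Ddem d w = Odem d w := rfl

theorem sum_accessFlow (hne : ∀ r, P r ≠ []) (hPH : ∀ r, ∀ k ∈ P r, k ∈ H) (i : Fin n) :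
    ∑ j ∈ univ.filter (fun j => j ≠ i), accessFlow H o w P i j =
      (1 - if i ∈ H then (1 : ℝ) else 0) * Odem o w i := by
  simp only [accessFlow, Odem, mul_sum]
  rw [sum_comm]
  refine sum_congr rfl fun r _ => ?_
  rw [sum_ite_zero _ _ (fun j _ k _ hj hk => hj.2.2.symm.trans hk.2.2)]
  have hex : (∃ j ∈ univ.filter (fun j => j ≠ i), o r ∉ H ∧ o r = i ∧ (P r).headD (o r) = j) ↔
      o r ∉ H ∧ o r = i := by
    refine ⟨fun ⟨_, _, h⟩ => ⟨h.1, h.2.1⟩, fun ⟨hoH, hoi⟩ => ⟨_, ?_, hoH, hoi, rfl⟩⟩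
    simp only [mem_filter, mem_univ, true_and]
    rintro hhi
    exact hoH (hoi ▸ hhi ▸ hPH r _ (List.headD_mem (hne r)))
  simp only [hex]
  by_cases hi : i ∈ H <;> grind

theorem inflow_eq_sum_visiting (hne : ∀ r, P r ≠ []) (hnd : ∀ r, (P r).Nodup)
    (hPH : ∀ r, ∀ k ∈ P r, k ∈ H) (hhead : ∀ r, o r ∈ H → (P r).head? = some (o r)) (i : Fin n) :
    Odem o w i * (if i ∈ H then (1 : ℝ) else 0) +
        ∑ j ∈ univ.filter (fun j => j ≠ i), (accessFlow H o w P j i + interFlow w P j i) =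
      ∑ r, if i ∈ P r then w r else 0 := by
  simp only [Odem, accessFlow, interFlow, sum_mul, sum_add_distrib]
  rw [sum_comm (s := univ.filter _), sum_comm (s := univ.filter _), ← sum_add_distrib,
    ← sum_add_distrib]
  refine sum_congr rfl fun r _ => ?_
  rw [sum_ite_zero _ _ (fun j _ k _ hj hk => hj.2.1.symm.trans hk.2.1),
    sum_ite_zero _ _ (fun j _ k _ hj hk => (hnd r).fst_eq_of_mem_zip_tail hj hk)]
  have hacc : (∃ j ∈ univ.filter (fun j => j ≠ i), o r ∉ H ∧ o r = j ∧ (P r).headD (o r) = i) ↔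
      o r ∉ H ∧ o r ≠ i ∧ (P r).headD (o r) = i := by
    simp only [mem_filter, mem_univ, true_and]
    exact ⟨fun ⟨_, hj, hoH, rfl, h⟩ => ⟨hoH, hj, h⟩, fun ⟨hoH, hoi, h⟩ => ⟨_, hoi, hoH, rfl, h⟩⟩
  have hint : (∃ j ∈ univ.filter (fun j => j ≠ i), (j, i) ∈ (P r).zip (P r).tail) ↔
      i ∈ (P r).tail := by
    rw [← List.exists_mem_zip_tail_iff_mem_tail]
    simp only [mem_filter, mem_univ, true_and]
    exact ⟨fun ⟨j, _, h⟩ => ⟨j, h⟩, fun ⟨j, h⟩ => ⟨j, (hnd r).ne_of_mem_zip_tail h, h⟩⟩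
  simp only [hacc, hint]
  exact inflow_single_eq (hne r) (hnd r) (hPH r) (hhead r) (w r)

theorem accessFlow_le (hw : ∀ r, 0 ≤ w r) (i j : Fin n) :
    accessFlow H o w P i j ≤
      Odem o w i * (if ∃ r, o r ∉ H ∧ o r = i ∧ (P r).headD (o r) = j then (1 : ℝ) else 0) := by
  split_ifs with h
  · rw [mul_one]
    exact sum_le_sum fun r _ => by split_ifs <;> grind
  · rw [mul_zero]
    exact (sum_eq_zero fun r _ => if_neg fun hr => h ⟨r, hr⟩).le

theorem interFlow_add_interFlow_le {E' : Finset (Fin n × Fin n)} (hw : ∀ r, 0 ≤ w r)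
    (hnd : ∀ r, (P r).Nodup) (hch : ∀ r, (P r).IsChain fun x y => (x, y) ∈ E')
    (hE' : ∀ p ∈ E', (p.2, p.1) ∈ E') (k m : Fin n) :
    interFlow w P k m + interFlow w P m k ≤
      (∑ r, w r) * (if (k, m) ∈ E' then (1 : ℝ) else 0) := by
  split_ifs with hkm
  · rw [mul_one, interFlow, interFlow, ← sum_add_distrib]
    refine sum_le_sum fun r _ => ?_
    by_cases h : (k, m) ∈ (P r).zip (P r).tail
    · simp [h, (hnd r).swap_not_mem_zip_tail h]
    · split_ifs <;> simp [hw r]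
  · have hmk : (m, k) ∉ E' := fun h => hkm (hE' _ h)
    rw [mul_zero, interFlow, interFlow,
      sum_eq_zero fun r _ => if_neg fun h => hkm ((hch r).rel_of_mem_zip_tail h),
      sum_eq_zero fun r _ => if_neg fun h => hmk ((hch r).rel_of_mem_zip_tail h), add_zero]

theorem sum_distFlow (hne : ∀ r, P r ≠ []) (hPH : ∀ r, ∀ k ∈ P r, k ∈ H) (i : Fin n) :
    ∑ j ∈ univ.filter (fun j => j ≠ i), distFlow H d w P j i =
      (1 - if i ∈ H then (1 : ℝ) else 0) * Ddem d w i := by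
  simp only [distFlow_eq_accessFlow_reverse]
  exact sum_accessFlow (by simpa using hne) (by simpa using hPH) i

theorem outflow_eq_sum_visiting (hne : ∀ r, P r ≠ []) (hnd : ∀ r, (P r).Nodup)
    (hPH : ∀ r, ∀ k ∈ P r, k ∈ H) (hlast : ∀ r, d r ∈ H → (P r).getLast? = some (d r))
    (i : Fin n) :
    Ddem d w i * (if i ∈ H then (1 : ℝ) else 0) +
        ∑ j ∈ univ.filter (fun j => j ≠ i), (distFlow H d w P i j + interFlow w P i j) =
      ∑ r, if i ∈ P r then w r else 0 := by
  simp only [distFlow_eq_accessFlow_reverse, interFlow_eq_interFlow_reverse (P := P),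
    Ddem_eq_Odem]
  simpa using inflow_eq_sum_visiting (o := d) (w := w) (P := fun r => (P r).reverse)
    (by simpa using hne) (fun r => List.nodup_reverse.2 (hnd r)) (by simpa using hPH)
    (by simpa using hlast) i

theorem distFlow_le (hw : ∀ r, 0 ≤ w r) (i j : Fin n) :
    distFlow H d w P i j ≤
      Ddem d w j * (if ∃ r, d r ∉ H ∧ d r = j ∧ (P r).getLastD (d r) = i then (1 : ℝ) else 0) := by
  simpa [distFlow_eq_accessFlow_reverse, Ddem_eq_Odem] using
    accessFlow_le (P := fun r => (P r).reverse) hw j i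

end Flows

theorem statement4_general {n : ℕ} {R : Type} [Fintype R]
    (o d : R → Fin n)
    (w : R → ℝ) (hw : ∀ r, 0 ≤ w r)
    (H : Finset (Fin n))
    (E' : Finset (Fin n × Fin n))
    (hE' : ∀ p ∈ E', p.1 ≠ p.2 ∧ p.1 ∈ H ∧ p.2 ∈ H ∧ (p.2, p.1) ∈ E')
    (P : R → List (Fin n)) (hP : ∀ r, IsRPath H E' (o r) (d r) (P r)) :
    (∀ i : Fin n,
      (∑ j ∈ univ.filter (fun j => j ≠ i), accessFlow H o w P i j) =
        (1 - if i ∈ H then (1 : ℝ) else 0) * Odem o w i ∧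
      (∑ j ∈ univ.filter (fun j => j ≠ i), distFlow H d w P j i) =
        (1 - if i ∈ H then (1 : ℝ) else 0) * Ddem d w i) ∧
    (∀ i : Fin n,
      Odem o w i * (if i ∈ H then (1 : ℝ) else 0) +
          (∑ j ∈ univ.filter (fun j => j ≠ i),
            (accessFlow H o w P j i + interFlow w P j i)) =
        Ddem d w i * (if i ∈ H then (1 : ℝ) else 0) +
          (∑ j ∈ univ.filter (fun j => j ≠ i),
            (distFlow H d w P i j + interFlow w P i j))) ∧
    (∀ i j : Fin n, i ≠ j →
      accessFlow H o w P i j ≤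
        Odem o w i *
          (if ∃ r, o r ∉ H ∧ o r = i ∧ (P r).headD (o r) = j then (1 : ℝ) else 0) ∧
      distFlow H d w P i j ≤
        Ddem d w j *
          (if ∃ r, d r ∉ H ∧ d r = j ∧ (P r).getLastD (d r) = i then (1 : ℝ) else 0)) ∧
    (∀ k m : Fin n, k ≠ m →
      interFlow w P k m + interFlow w P m k ≤
        (∑ r, w r) * (if (k, m) ∈ E' then (1 : ℝ) else 0)) := by
  have hne r : P r ≠ [] := (hP r).1
  have hnd r : (P r).Nodup := (hP r).2.1
  have hPH r : ∀ k ∈ P r, k ∈ H := (hP r).2.2.1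
  have hch r : (P r).IsChain fun x y => (x, y) ∈ E' := (hP r).2.2.2.1
  have hhead r : o r ∈ H → (P r).head? = some (o r) := (hP r).2.2.2.2.1
  have hlast r : d r ∈ H → (P r).getLast? = some (d r) := (hP r).2.2.2.2.2
  refine ⟨fun i => ⟨sum_accessFlow hne hPH i, sum_distFlow hne hPH i⟩, fun i => ?_,
    fun i j _ => ⟨accessFlow_le hw i j, distFlow_le hw i j⟩,
    fun k m _ => interFlow_add_interFlow_le hw hnd hch (fun p hp => (hE' p hp).2.2.2) k m⟩
  rw [inflow_eq_sum_visiting hne hnd hPH hhead, outflow_eq_sum_visiting hne hnd hPH hlast]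

/-- Validity of the flow-balance and capacity constraints of the aggregated
formulation for a feasible MA-GHLP solution `(H, E', P)`, where
`z_i = 1` iff `i ∈ H`, `y_{km} = 1` iff `km ∈ E'`,
`x¹_{ij} = 1` iff some `P^r` uses `(i,j)` as an access arc and
`x²_{ij} = 1` iff some `P^r` uses `(i,j)` as a distribution arc:
(a) flow balance at non-hub nodes, (b) flow balance at hub nodes,
(c) the access and distribution flow bounds, and (d) the interhub capacity
constraints. -/
theorem statement4 {n : ℕ} (hn : 2 ≤ n) {R : Type} [Fintype R]
    (o d : R → Fin n) (hod : ∀ r, o r ≠ d r)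
    (w : R → ℝ) (hw : ∀ r, 0 ≤ w r)
    (hinj : Function.Injective fun r => (o r, d r))
    (H : Finset (Fin n)) (hH : H.Nonempty)
    (E' : Finset (Fin n × Fin n))
    (hE' : ∀ p ∈ E', p.1 ≠ p.2 ∧ p.1 ∈ H ∧ p.2 ∈ H ∧ (p.2, p.1) ∈ E')
    (P : R → List (Fin n)) (hP : ∀ r, IsRPath H E' (o r) (d r) (P r)) :
    (∀ i : Fin n,
      (∑ j ∈ univ.filter (fun j => j ≠ i), accessFlow H o w P i j) =
        (1 - if i ∈ H then (1 : ℝ) else 0) * Odem o w i ∧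
      (∑ j ∈ univ.filter (fun j => j ≠ i), distFlow H d w P j i) =
        (1 - if i ∈ H then (1 : ℝ) else 0) * Ddem d w i) ∧
    (∀ i : Fin n,
      Odem o w i * (if i ∈ H then (1 : ℝ) else 0) +
          (∑ j ∈ univ.filter (fun j => j ≠ i),
            (accessFlow H o w P j i + interFlow w P j i)) =
        Ddem d w i * (if i ∈ H then (1 : ℝ) else 0) +
          (∑ j ∈ univ.filter (fun j => j ≠ i),
            (distFlow H d w P i j + interFlow w P i j))) ∧
    (∀ i j : Fin n, i ≠ j →
      accessFlow H o w P i j ≤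
        Odem o w i *
          (if ∃ r, o r ∉ H ∧ o r = i ∧ (P r).headD (o r) = j then (1 : ℝ) else 0) ∧
      distFlow H d w P i j ≤
        Ddem d w j *
          (if ∃ r, d r ∉ H ∧ d r = j ∧ (P r).getLastD (d r) = i then (1 : ℝ) else 0)) ∧
    (∀ k m : Fin n, k ≠ m →
      interFlow w P k m + interFlow w P m k ≤
        (∑ r, w r) * (if (k, m) ∈ E' then (1 : ℝ) else 0)) :=
  statement4_general o d w hw H E' hE' P hP
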